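/- arXiv:1607.00921 — 3 statements merged into one kernel-verified Lean document; each statement's English description precedes it below -/
import Mathlib

section
/- Let R be a ring which is a finitely generated module over a central subring C, and let P be a prime ideal of R. Then the height of the prime ideal P ∩ C of C is at least the height of P. -/
set_option maxHeartbeats 1000000
set_option linter.unusedVariables false

open FiniteDimensional Module TensorProduct

section L1

variable {F A : Type*} [Field F] [Ring A] [Algebra F A]

def cornerSub (F : Type*) {A : Type*} [Field F] [Ring A] [Algebra F A] (g : A) :
    Submodule F A where
  carrier := {x | g * x * g = x}
  add_mem' := by
    intro x y hx hy
    simp only [Set.mem_setOf_eq] at *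
    rw [mul_add, add_mul, hx, hy]
  zero_mem' := by simp
  smul_mem' := by
    intro c x hx
    simp only [Set.mem_setOf_eq] at *
    rw [Algebra.mul_smul_comm, Algebra.smul_mul_assoc, hx]

lemma mem_cornerSub {g x : A} : x ∈ cornerSub F g ↔ g * x * g = x := Iff.rfl

theorem corner_mem_ideal [FiniteDimensional F A]
    (hpr : ∀ x y : A, (∀ r : A, x * r * y = 0) → x = 0 ∨ y = 0)
    (I : Submodule F A) (hIl : ∀ r x : A, x ∈ I → r * x ∈ I)
    (hIr : ∀ r x : A, x ∈ I → x * r ∈ I) :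
    ∀ n : ℕ, ∀ g : A, g * g = g → (∃ i ∈ I, g * i * g ≠ 0) →
      finrank F (cornerSub F g) ≤ n → g ∈ I := by
  intro n
  induction n using Nat.strong_induction_on with
  | _ n IH =>
  intro g hg hex hrank
  obtain ⟨i₀, hi₀I, hi₀⟩ := hex
  -- basic idempotent computations
  have hR : ∀ x : A, (g * x * g) * g = g * x * g := fun x => by
    rw [mul_assoc (g * x) g g, hg]
  have hL : ∀ x : A, g * (g * x * g) = g * x * g := fun x => by
    rw [← mul_assoc, ← mul_assoc, hg]
  have hvg : ∀ v : A, g * v * g = v → v * g = v := by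
    intro v hv
    conv_lhs => rw [← hv]
    rw [hR, hv]
  have hgv : ∀ v : A, g * v * g = v → g * v = v := by
    intro v hv
    conv_lhs => rw [← hv]
    rw [hL, hv]
  set z : A := g * i₀ * g with hzdef
  have hzc : g * z * g = z := by rw [hzdef, hL, hR]
  have hzI : z ∈ I := hIr g _ (hIl g _ hi₀I)
  have hz0 : z ≠ 0 := hi₀
  -- the family of nonzero corner-left-ideals inside I
  set good : Submodule F A → Prop := fun V =>
    V ≠ ⊥ ∧ (∀ v ∈ V, v ∈ I) ∧ (∀ v ∈ V, g * v * g = v) ∧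
      (∀ (a : A), ∀ v ∈ V, (g * a * g) * v ∈ V) with hgood_def
  -- the starter
  have hstart : good (Submodule.span F (Set.range fun a : A => (g * a * g) * z)) := by
    refine ⟨?_, ?_, ?_, ?_⟩
    · intro hbot
      apply hz0
      have : z ∈ Submodule.span F (Set.range fun a : A => (g * a * g) * z) := by
        apply Submodule.subset_span
        refine ⟨1, ?_⟩
        show g * 1 * g * z = z
        rw [mul_one, hg, hgv z hzc]
      rw [hbot] at this
      simpa using this
    · intro v hv
      induction hv using Submodule.span_induction with
      | mem x hx => obtain ⟨a, rfl⟩ := hx; exact hIl _ _ hzI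
      | zero => exact I.zero_mem
      | add x y _ _ hx hy => exact I.add_mem hx hy
      | smul c x _ hx => exact I.smul_mem c hx
    · intro v hv
      induction hv using Submodule.span_induction with
      | mem x hx =>
        obtain ⟨a, rfl⟩ := hx
        rw [← mul_assoc, hL, mul_assoc, hvg z hzc]
      | zero => simp
      | add x y _ _ hx hy => rw [mul_add, add_mul, hx, hy]
      | smul c x _ hx => rw [Algebra.mul_smul_comm, Algebra.smul_mul_assoc, hx]
    · intro a v hv
      induction hv using Submodule.span_induction with
      | mem x hx =>
        obtain ⟨b, rfl⟩ := hx
        apply Submodule.subset_span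
        refine ⟨a * (g * b), ?_⟩
        show g * (a * (g * b)) * g * z = g * a * g * (g * b * g * z)
        simp only [mul_assoc]
        rw [← mul_assoc g g, hg]
      | zero => simp
      | add x y _ _ hx hy => rw [mul_add]; exact Submodule.add_mem _ hx hy
      | smul c x _ hx =>
        rw [Algebra.mul_smul_comm]
        exact Submodule.smul_mem _ c hx
  -- choose V of minimal dimension among good submodules
  have hS : ∃ k : ℕ, ∃ V : Submodule F A, good V ∧ finrank F V = k :=
    ⟨_, _, hstart, rfl⟩
  obtain ⟨V, hVgood, hVrank⟩ :
      ∃ V : Submodule F A, good V ∧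
        finrank F V = sInf {k : ℕ | ∃ V : Submodule F A, good V ∧ finrank F V = k} :=
    Nat.sInf_mem hS
  have hmin : ∀ W : Submodule F A, good W → W ≤ V → W = V := by
    intro W hW hle
    refine Submodule.eq_of_le_of_finrank_le hle ?_
    rw [hVrank]
    exact Nat.sInf_le ⟨W, hW, rfl⟩
  obtain ⟨hVbot, hVI, hVc, hVabs⟩ := hVgood
  -- Brauer's lemma: find an idempotent e in V
  obtain ⟨v₁, hv₁V, hv₁0⟩ := Submodule.exists_mem_ne_zero_of_ne_bot hVbot
  have hv₁c : g * v₁ * g = v₁ := hVc v₁ hv₁V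
  obtain ⟨r, hr⟩ : ∃ r : A, v₁ * r * v₁ ≠ 0 := by
    by_contra h
    push_neg at h
    rcases hpr v₁ v₁ h with h' | h' <;> exact hv₁0 h'
  set u : A := (g * r * g) * v₁ with hudef
  have huV : u ∈ V := hVabs r v₁ hv₁V
  have huc : g * u * g = u := hVc u huV
  have hvu : v₁ * u = v₁ * r * v₁ := by
    calc v₁ * (g * r * g * v₁) = v₁ * g * r * (g * v₁) := by simp only [mul_assoc]
    _ = v₁ * r * v₁ := by rw [hvg _ hv₁c, hgv _ hv₁c]
  have hvu0 : v₁ * u ≠ 0 := by rw [hvu]; exact hr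
  have hu0 : u ≠ 0 := by
    intro h
    apply hvu0
    rw [h, mul_zero]
  -- V * u = V by minimality
  have hVu : Submodule.map (LinearMap.mulRight F u) V = V := by
    apply hmin
    · refine ⟨?_, ?_, ?_, ?_⟩
      · intro hbot
        apply hvu0
        have : v₁ * u ∈ Submodule.map (LinearMap.mulRight F u) V :=
          ⟨v₁, hv₁V, rfl⟩
        rw [hbot] at this
        simpa using this
      · rintro _ ⟨v, hv, rfl⟩
        exact hIr u v (hVI v hv)
      · rintro _ ⟨v, hv, rfl⟩
        show g * (v * u) * g = v * u
        calc g * (v * u) * g = g * v * (u * g) := by simp only [mul_assoc]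
        _ = v * u := by rw [hgv _ (hVc v hv), hvg _ huc]
      · rintro a _ ⟨v, hv, rfl⟩
        refine ⟨(g * a * g) * v, hVabs a v hv, ?_⟩
        show (g * a * g * v) * u = g * a * g * (v * u)
        simp only [mul_assoc]
    · rintro _ ⟨v, hv, rfl⟩
      show v * u ∈ V
      have : (g * v * g) * u ∈ V := hVabs v u huV
      rwa [hVc v hv] at this
  obtain ⟨e, heV, heu⟩ : ∃ e ∈ V, e * u = u := by
    have : u ∈ Submodule.map (LinearMap.mulRight F u) V := by rw [hVu]; exact huV
    obtain ⟨e, heV, he⟩ := this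
    exact ⟨e, heV, he⟩
  have hec : g * e * g = e := hVc e heV
  have heI : e ∈ I := hVI e heV
  have heg : e * g = e := hvg e hec
  have hge : g * e = e := hgv e hec
  have he0 : e ≠ 0 := by
    intro h
    apply hu0
    rw [← heu, h, zero_mul]
  -- W := {v ∈ V | v * u = 0} is zero
  have hW : V ⊓ LinearMap.ker (LinearMap.mulRight F u) = ⊥ := by
    by_contra hbot
    have hWgood : good (V ⊓ LinearMap.ker (LinearMap.mulRight F u)) := by
      refine ⟨hbot, ?_, ?_, ?_⟩
      · intro v hv; exact hVI v hv.1
      · intro v hv; exact hVc v hv.1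
      · intro a v hv
        refine ⟨hVabs a v hv.1, ?_⟩
        have hv2 : v * u = 0 := by simpa using hv.2
        show (g * a * g * v) * u = 0
        rw [mul_assoc (g * a * g) v u, hv2, mul_zero]
    have hWV := hmin _ hWgood inf_le_left
    have : e ∈ V ⊓ LinearMap.ker (LinearMap.mulRight F u) := by rw [hWV]; exact heV
    have : e * u = 0 := by simpa using this.2
    rw [heu] at this
    exact hu0 this
  -- e is idempotent
  have he2 : e * e = e := by
    have hmem : e * e - e ∈ V ⊓ LinearMap.ker (LinearMap.mulRight F u) := by
      constructor
      · have h1 : (g * e * g) * e ∈ V := hVabs e e heV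
        rw [hec] at h1
        exact Submodule.sub_mem V h1 heV
      · show e * e - e ∈ LinearMap.ker (LinearMap.mulRight F u)
        rw [LinearMap.mem_ker, LinearMap.mulRight_apply, sub_mul, mul_assoc, heu, heu, sub_self]
    rw [hW] at hmem
    have : e * e - e = 0 := by simpa using hmem
    rwa [sub_eq_zero] at this
  -- now set f = g - e
  set f : A := g - e with hfdef
  have hgef : g = e + f := by rw [hfdef]; abel
  have hef : e * f = 0 := by rw [hfdef, mul_sub, heg, he2, sub_self]
  have hfe : f * e = 0 := by rw [hfdef, sub_mul, hge, he2, sub_self]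
  have hf2 : f * f = f := by
    rw [hfdef, mul_sub, sub_mul, sub_mul, hg, hge, heg, he2]
    abel
  have hgf : g * f = f := by rw [hfdef, mul_sub, hg, hge]
  have hfg : f * g = f := by rw [hfdef, sub_mul, hg, heg]
  by_cases hf0 : f = 0
  · rw [show g = e from by rw [hgef, hf0, add_zero]]
    exact heI
  · -- f ≠ 0 : show f ∈ I via the induction hypothesis, or derive a contradiction
    by_cases hfi : ∃ i ∈ I, f * i * f ≠ 0
    · -- corner of f is strictly smaller
      have hcle : cornerSub F f ≤ cornerSub F g := by
        intro x hx
        rw [mem_cornerSub] at hx ⊢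
        conv_lhs => rw [← hx]
        have : g * (f * x * f) * g = (g * f) * x * (f * g) := by simp only [mul_assoc]
        rw [this, hgf, hfg, hx]
      have hclt : cornerSub F f < cornerSub F g := by
        refine lt_of_le_of_ne hcle ?_
        intro hEq
        have he_mem : e ∈ cornerSub F g := by rw [mem_cornerSub, hec]
        rw [← hEq, mem_cornerSub] at he_mem
        -- he_mem : f * e * f = e
        apply he0
        calc e = e * e := he2.symm
        _ = e * (f * e * f) := by rw [he_mem]
        _ = (e * f) * (e * f) := by simp only [mul_assoc]
        _ = 0 := by rw [hef, zero_mul]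
      have hlt : finrank F (cornerSub F f) < finrank F (cornerSub F g) :=
        Submodule.finrank_lt_finrank_of_lt hclt
      have hfI : f ∈ I :=
        IH (finrank F (cornerSub F f)) (lt_of_lt_of_le hlt hrank) f hf2 hfi le_rfl
      rw [hgef]
      exact I.add_mem heI hfI
    · -- impossible : leads to f = 0 or e = 0
      exfalso
      push_neg at hfi
      by_cases hef' : ∃ a₀ : A, e * a₀ * f ≠ 0
      · obtain ⟨a₀, ha₀⟩ := hef'
        have hfae : ∀ a : A, f * a * e = 0 := by
          intro a
          have hz' : ∀ r : A, (f * a * e) * r * (e * a₀ * f) = 0 := by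
            intro r
            have hm : (f * a * e) * r * (e * a₀ * f) = f * (a * e * r * e * a₀) * f := by
              simp only [mul_assoc]
            rw [hm]
            exact hfi _ (hIr a₀ _ (hIr e _ (hIr r _ (hIl a e heI))))
          rcases hpr (f * a * e) (e * a₀ * f) hz' with h | h
          · exact h
          · exact absurd h ha₀
        rcases hpr f e (fun r => hfae r) with h | h
        · exact hf0 h
        · exact he0 h
      · push_neg at hef'
        rcases hpr e f (fun r => hef' r) with h | h
        · exact he0 h
        · exact hf0 h

theorem one_mem_of_prime' [FiniteDimensional F A]
    (hpr : ∀ x y : A, (∀ r : A, x * r * y = 0) → x = 0 ∨ y = 0)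
    (I : Submodule F A) (hIl : ∀ r x : A, x ∈ I → r * x ∈ I)
    (hIr : ∀ r x : A, x ∈ I → x * r ∈ I)
    (x : A) (hxI : x ∈ I) (hx0 : x ≠ 0) : (1 : A) ∈ I :=
  corner_mem_ideal hpr I hIl hIr (finrank F (cornerSub F 1)) 1 (one_mul 1)
    ⟨x, hxI, by simpa using hx0⟩ le_rfl

end L1

/-- In a prime ring that is a finite module over a central domain (with injective structure
map), every nonzero two-sided ideal contains a nonzero central element. -/
theorem exists_central_mem {D R' : Type*} [CommRing D] [IsDomain D] [Ring R'] [Algebra D R']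
    [Module.Finite D R'] (hinj : Function.Injective (algebraMap D R'))
    (hpr : ∀ x y : R', (∀ r : R', x * r * y = 0) → x = 0 ∨ y = 0)
    (Q' : TwoSidedIdeal R') (a : R') (haQ : a ∈ Q') (ha0 : a ≠ 0) :
    ∃ d : D, d ≠ 0 ∧ algebraMap D R' d ∈ Q' := by
  classical
  set F := FractionRing D
  set A := F ⊗[D] R'
  set f : R' →ₗ[D] A := TensorProduct.mk D F R' 1 with hfdef
  have hloc : IsLocalizedModule (nonZeroDivisors D) f :=
    (isLocalizedModule_iff_isBaseChange (nonZeroDivisors D) F f).mpr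
      (TensorProduct.isBaseChange D R' F)
  have hf_apply : ∀ x : R', f x = (1 : F) ⊗ₜ[D] x := fun x => rfl
  -- f is multiplicative and sends 1 to 1
  have hf_mul : ∀ x y : R', f (x * y) = f x * f y := by
    intro x y
    rw [hf_apply, hf_apply, hf_apply, Algebra.TensorProduct.tmul_mul_tmul, one_mul]
  have hf_one : f 1 = 1 := rfl
  -- torsion-freeness of R' over D
  have htf : ∀ (x : R') (s : D), s ≠ 0 → s • x = 0 → x = 0 := by
    intro x s hs h
    have hcen : ∀ r : R', algebraMap D R' s * r * x = 0 := by
      intro r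
      rw [Algebra.commutes s r, mul_assoc, ← Algebra.smul_def, h, mul_zero]
    rcases hpr _ _ hcen with h' | h'
    · exact absurd (hinj (h'.trans (map_zero (algebraMap D R')).symm)) hs
    · exact h'
  -- injectivity of f
  have hf0 : ∀ x : R', f x = 0 → x = 0 := by
    intro x hx
    obtain ⟨s, hs⟩ := (IsLocalizedModule.eq_zero_iff (nonZeroDivisors D) f).mp hx
    exact htf x s (nonZeroDivisors.coe_ne_zero s) hs
  -- surjectivity up to denominators
  have hsurj : ∀ y : A, ∃ (x : R') (s : nonZeroDivisors D), s • y = f x := by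
    intro y
    obtain ⟨⟨x, s⟩, hxs⟩ := IsLocalizedModule.surj (nonZeroDivisors D) f y
    exact ⟨x, s, hxs⟩
  -- scalars from D act invertibly on A
  have hs_smul : ∀ (s : nonZeroDivisors D) (x y : A), s • x = s • y → x = y := by
    intro s x y h
    have h1 : (algebraMap D F (s : D)) • x = (algebraMap D F (s : D)) • y := by
      rwa [algebraMap_smul, algebraMap_smul]
    have h2 : algebraMap D F (s : D) ≠ 0 := by
      simpa using (IsFractionRing.injective D F).ne_iff.mpr (nonZeroDivisors.coe_ne_zero s)
    calc x = (algebraMap D F (s : D))⁻¹ • ((algebraMap D F (s : D)) • x) := by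
            rw [inv_smul_smul₀ h2]
    _ = (algebraMap D F (s : D))⁻¹ • ((algebraMap D F (s : D)) • y) := by rw [h1]
    _ = y := by rw [inv_smul_smul₀ h2]
  have hsub : ∀ (s : nonZeroDivisors D) (x : A), s • x = ((s : D)) • x := fun _ _ => rfl
  -- commuting D- and F- scalars
  have hds : ∀ (d : D) (c : F) (w : A), d • (c • w) = c • (d • w) := by
    intro d c w
    rw [← algebraMap_smul F d w, ← algebraMap_smul F d (c • w), smul_smul, smul_smul, mul_comm]
  -- A is a prime ring
  have hprA : ∀ x y : A, (∀ r : A, x * r * y = 0) → x = 0 ∨ y = 0 := by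
    intro x y h
    obtain ⟨x₀, s, hs⟩ := hsurj x
    obtain ⟨y₀, t, ht⟩ := hsurj y
    have key : ∀ r₀ : R', x₀ * r₀ * y₀ = 0 := by
      intro r₀
      apply hf0
      have : f x₀ * f r₀ * f y₀ = (s : D) • ((t : D) • (x * f r₀ * y)) := by
        rw [← hs, ← ht, hsub, hsub]
        rw [smul_mul_assoc, smul_mul_assoc, mul_smul_comm]
      rw [← hf_mul, ← hf_mul] at this
      rw [this, h (f r₀), smul_zero, smul_zero]
    rcases hpr x₀ y₀ key with h' | h'
    · left
      apply hs_smul s x 0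
      rw [smul_zero, hs, h', map_zero]
    · right
      apply hs_smul t y 0
      rw [smul_zero, ht, h', map_zero]
  -- the F-submodule of A generated by (the image of) Q' with denominators
  set Iset : Submodule F A :=
    { carrier := {x : A | ∃ (s : nonZeroDivisors D) (q : R'), q ∈ Q' ∧ s • x = f q}
      add_mem' := by
        rintro x y ⟨s, q₁, hq₁, hx⟩ ⟨t, q₂, hq₂, hy⟩
        refine ⟨s * t, (t : D) • q₁ + (s : D) • q₂, ?_, ?_⟩
        · refine TwoSidedIdeal.add_mem _ ?_ ?_
          · rw [Algebra.smul_def]; exact Q'.mul_mem_left _ _ hq₁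
          · rw [Algebra.smul_def]; exact Q'.mul_mem_left _ _ hq₂
        · rw [map_add, map_smul, map_smul, ← hx, ← hy]
          show ((s * t : nonZeroDivisors D) : D) • (x + y) =
            (t : D) • ((s : D) • x) + (s : D) • ((t : D) • y)
          rw [smul_add, Submonoid.coe_mul, mul_smul, mul_smul]
          rw [smul_comm (s : D) (t : D) x]
      zero_mem' := ⟨1, 0, Q'.zero_mem, by rw [map_zero, smul_zero]⟩
      smul_mem' := by
        rintro c x ⟨s, q, hq, hx⟩
        obtain ⟨⟨u, v⟩, hc⟩ := IsLocalization.mk'_surjective (nonZeroDivisors D) c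
        refine ⟨v * s, u • q, by rw [Algebra.smul_def]; exact Q'.mul_mem_left _ _ hq, ?_⟩
        rw [map_smul, ← hx]
        show ((v * s : nonZeroDivisors D) : D) • (c • x) = u • ((s : D) • x)
        rw [Submonoid.coe_mul, mul_smul]
        rw [hds (s : D) c x, ← algebraMap_smul F (v : D) (c • ((s : D) • x)), smul_smul]
        have hvc : algebraMap D F (v : D) * c = algebraMap D F u := by
          rw [← hc, mul_comm]
          exact IsLocalization.mk'_spec F u v
        rw [hvc, algebraMap_smul] }
    with hIset_def
  have hmem_Iset : ∀ x : A, x ∈ Iset ↔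
      ∃ (s : nonZeroDivisors D) (q : R'), q ∈ Q' ∧ s • x = f q := fun _ => Iff.rfl
  have hIl : ∀ r x : A, x ∈ Iset → r * x ∈ Iset := by
    intro r x hx
    obtain ⟨s, q, hq, hsx⟩ := (hmem_Iset x).mp hx
    obtain ⟨r₀, t, ht⟩ := hsurj r
    refine (hmem_Iset _).mpr ⟨t * s, r₀ * q, Q'.mul_mem_left _ _ hq, ?_⟩
    rw [hf_mul, ← ht, ← hsx, hsub, hsub]
    show ((t * s : nonZeroDivisors D) : D) • (r * x) = ((t : D) • r) * ((s : D) • x)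
    rw [Submonoid.coe_mul, mul_smul]
    rw [smul_mul_assoc, mul_smul_comm]
  have hIr : ∀ r x : A, x ∈ Iset → x * r ∈ Iset := by
    intro r x hx
    obtain ⟨s, q, hq, hsx⟩ := (hmem_Iset x).mp hx
    obtain ⟨r₀, t, ht⟩ := hsurj r
    refine (hmem_Iset _).mpr ⟨s * t, q * r₀, Q'.mul_mem_right _ _ hq, ?_⟩
    rw [hf_mul, ← ht, ← hsx, hsub, hsub]
    show ((s * t : nonZeroDivisors D) : D) • (x * r) = ((s : D) • x) * ((t : D) • r)
    rw [Submonoid.coe_mul, mul_smul]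
    rw [smul_mul_assoc, mul_smul_comm]
  have hfa : f a ∈ Iset := (hmem_Iset _).mpr ⟨1, a, haQ, by rw [one_smul]⟩
  have hfa0 : f a ≠ 0 := fun h => ha0 (hf0 a h)
  have h1 : (1 : A) ∈ Iset := one_mem_of_prime' hprA Iset hIl hIr (f a) hfa hfa0
  obtain ⟨s, q, hq, hsq⟩ := (hmem_Iset _).mp h1
  have hs1 : s • (1 : A) = f (algebraMap D R' (s : D)) := by
    rw [hsub]
    show (s : D) • (1 : A) = (1 : F) ⊗ₜ[D] algebraMap D R' (s : D)
    rw [Algebra.TensorProduct.one_def, Algebra.algebraMap_eq_smul_one, tmul_smul]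
  refine ⟨(s : D), nonZeroDivisors.coe_ne_zero s, ?_⟩
  have hz : f (algebraMap D R' (s : D) - q) = 0 := by
    rw [map_sub, ← hs1, hsq, sub_self]
  have heq : algebraMap D R' (s : D) = q := by
    have h' := hf0 _ hz
    rwa [sub_eq_zero] at h'
  rw [heq]
  exact hq



/-- A two-sided ideal of a (possibly noncommutative) ring is prime. -/
def IsPrimeTS {R : Type*} [Ring R] (P : TwoSidedIdeal R) : Prop :=
  P ≠ ⊤ ∧ ∀ a b : R, (∀ r : R, a * r * b ∈ P) → a ∈ P ∨ b ∈ P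

/-- Height of an element `P` in a poset with respect to a predicate (`prime`):
the supremum of lengths of strictly increasing chains of elements satisfying the
predicate and ending at `P`. -/
noncomputable def primeChainHeight {α : Type*} [Preorder α] (isP : α → Prop) (P : α) : ℕ∞ :=
  sSup {n : ℕ∞ | ∃ m : ℕ, n = (m : ℕ∞) ∧ ∃ f : Fin (m + 1) → α,
    StrictMono f ∧ (∀ i, isP (f i)) ∧ f (Fin.last m) = P}

/-- Height (codimension) of a two-sided ideal: the supremum of lengths of chains of
prime two-sided ideals descending from it. -/
noncomputable def tsHeight {R : Type*} [Ring R] (P : TwoSidedIdeal R) : ℕ∞ :=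
  primeChainHeight IsPrimeTS P

/-- Height of an ideal of a commutative ring. -/
noncomputable def cHeight {C : Type*} [CommRing C] (p : Ideal C) : ℕ∞ :=
  primeChainHeight Ideal.IsPrime p

/-- Contraction `P ∩ C` of a two-sided ideal of `R` to the central subring `C`
(given via the algebra structure map, whose image is central). -/
def contractTS {C R : Type*} [CommRing C] [Ring R] [Algebra C R]
    (P : TwoSidedIdeal R) : Ideal C :=
  Ideal.comap (algebraMap C R) (TwoSidedIdeal.asIdeal P)


section Contract
variable {C R : Type*} [CommRing C] [Ring R] [Algebra C R]

lemma mem_contractTS {P : TwoSidedIdeal R} {c : C} :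
    c ∈ contractTS (C := C) P ↔ algebraMap C R c ∈ P := by
  rw [contractTS, Ideal.mem_comap, TwoSidedIdeal.mem_asIdeal]

/-- The contraction of a prime two-sided ideal is a prime ideal. -/
theorem contractTS_isPrime (P : TwoSidedIdeal R) (hP : IsPrimeTS P) :
    (contractTS (C := C) P).IsPrime := by
  constructor
  · intro h
    apply hP.1
    have h1 : (1 : C) ∈ contractTS (C := C) P := h ▸ Submodule.mem_top
    rw [mem_contractTS, map_one] at h1
    rw [eq_top_iff]
    intro x _
    simpa using P.mul_mem_left x 1 h1
  · intro x y hxy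
    rw [mem_contractTS, map_mul] at hxy
    have key : ∀ r : R, algebraMap C R x * r * algebraMap C R y ∈ P := by
      intro r
      have heq : algebraMap C R x * r * algebraMap C R y =
          r * (algebraMap C R x * algebraMap C R y) := by
        rw [Algebra.commutes x r, mul_assoc]
      rw [heq]
      exact P.mul_mem_left _ _ hxy
    rcases hP.2 _ _ key with h | h
    · exact Or.inl (mem_contractTS.mpr h)
    · exact Or.inr (mem_contractTS.mpr h)

end Contract

section Incomp
variable {C R : Type*} [CommRing C] [Ring R] [Algebra C R] [Module.Finite C R]

theorem contractTS_lt_contractTS (P Q : TwoSidedIdeal R) (hP : IsPrimeTS P)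
    (hPQ : P < Q) : contractTS (C := C) P < contractTS (C := C) Q := by
  classical
  -- the quotient ring R/P
  set R' := P.ringCon.Quotient with hR'def
  set π : R →+* R' := RingCon.mk' P.ringCon with hπdef
  have hker : ∀ x : R, π x = 0 ↔ x ∈ P := by
    intro x
    have : (0 : R') = π 0 := rfl
    rw [this]
    show (x : R') = (0 : R) ↔ _
    rw [RingCon.eq, TwoSidedIdeal.rel_iff, sub_zero]
  have hπs : Function.Surjective π := fun y => Quotient.inductionOn' y fun x => ⟨x, rfl⟩
  -- the quotient domain D = C/p
  set p : Ideal C := contractTS (C := C) P with hpdef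
  haveI hp : p.IsPrime := contractTS_isPrime P hP
  set D := C ⧸ p with hDdef
  have hlift : ∀ c ∈ p, (π.comp (algebraMap C R)) c = 0 := by
    intro c hc
    exact (hker _).mpr (mem_contractTS.mp hc)
  set φ : D →+* R' := Ideal.Quotient.lift p (π.comp (algebraMap C R)) hlift with hφdef
  have hφmk : ∀ c : C, φ (Ideal.Quotient.mk p c) = π (algebraMap C R c) := fun c => rfl
  have hcentral : ∀ (d : D) (x : R'), φ d * x = x * φ d := by
    intro d x
    obtain ⟨c, rfl⟩ := Ideal.Quotient.mk_surjective d
    obtain ⟨r, rfl⟩ := hπs x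
    rw [hφmk, ← map_mul, ← map_mul, Algebra.commutes]
  letI : Algebra D R' := RingHom.toAlgebra' φ hcentral
  have halg : ∀ d : D, algebraMap D R' d = φ d := fun _ => rfl
  -- injectivity of the structure map
  have hinj : Function.Injective (algebraMap D R') := by
    intro d₁ d₂ h
    obtain ⟨c₁, rfl⟩ := Ideal.Quotient.mk_surjective d₁
    obtain ⟨c₂, rfl⟩ := Ideal.Quotient.mk_surjective d₂
    rw [halg, halg, hφmk, hφmk] at h
    have : π (algebraMap C R (c₁ - c₂)) = 0 := by
      rw [map_sub, map_sub, h, sub_self]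
    rw [hker] at this
    have : c₁ - c₂ ∈ p := mem_contractTS.mpr this
    rwa [Ideal.Quotient.mk_eq_mk_iff_sub_mem]
  -- finiteness of R' over D
  haveI hfin : Module.Finite D R' := by
    obtain ⟨s, hs⟩ := Module.Finite.fg_top (R := C) (M := R)
    refine ⟨⟨s.image π, ?_⟩⟩
    rw [eq_top_iff]
    rintro x -
    obtain ⟨r, rfl⟩ := hπs x
    have hr : r ∈ Submodule.span C (s : Set R) := by rw [hs]; trivial
    induction hr using Submodule.span_induction with
    | mem y hy =>
      apply Submodule.subset_span
      exact Finset.mem_image_of_mem π hy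
    | zero => rw [map_zero]; exact Submodule.zero_mem _
    | add y z _ _ hy hz => rw [map_add]; exact Submodule.add_mem _ hy hz
    | smul c y _ hy =>
      have : π (c • y) = (Ideal.Quotient.mk p c) • π y := by
        rw [Algebra.smul_def, map_mul]
        rw [Algebra.smul_def, halg, hφmk]
      rw [this]
      exact Submodule.smul_mem _ _ hy
  -- primeness of R'
  have hpr : ∀ x y : R', (∀ r : R', x * r * y = 0) → x = 0 ∨ y = 0 := by
    intro x y h
    obtain ⟨a, rfl⟩ := hπs x
    obtain ⟨b, rfl⟩ := hπs y
    have key : ∀ r : R, a * r * b ∈ P := by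
      intro r
      rw [← hker, map_mul, map_mul]
      exact h (π r)
    rcases hP.2 a b key with h' | h'
    · exact Or.inl ((hker a).mpr h')
    · exact Or.inr ((hker b).mpr h')
  -- the image of Q in R'
  set Q' : TwoSidedIdeal R' := TwoSidedIdeal.mk' (π '' Q)
    ⟨0, Q.zero_mem, map_zero π⟩
    (by rintro _ _ ⟨q₁, hq₁, rfl⟩ ⟨q₂, hq₂, rfl⟩; exact ⟨q₁ + q₂, Q.add_mem hq₁ hq₂, map_add π _ _⟩)
    (by rintro _ ⟨q, hq, rfl⟩; exact ⟨-q, Q.neg_mem hq, map_neg π q⟩)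
    (by
      rintro x _ ⟨q, hq, rfl⟩
      obtain ⟨r, rfl⟩ := hπs x
      exact ⟨r * q, Q.mul_mem_left r q hq, map_mul π r q⟩)
    (by
      rintro _ y ⟨q, hq, rfl⟩
      obtain ⟨r, rfl⟩ := hπs y
      exact ⟨q * r, Q.mul_mem_right q r hq, map_mul π q r⟩) with hQ'def
  have hQ'mem : ∀ x : R', x ∈ Q' ↔ x ∈ π '' Q := fun x =>
    TwoSidedIdeal.mem_mk' _ _ _ _ _ _ x
  -- a nonzero element of Q'
  obtain ⟨a₀, ha₀Q, ha₀P⟩ : ∃ a₀, a₀ ∈ Q ∧ a₀ ∉ P := by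
    rw [TwoSidedIdeal.lt_iff] at hPQ
    obtain ⟨x, hxQ, hxP⟩ := Set.exists_of_ssubset hPQ
    exact ⟨x, hxQ, hxP⟩
  have hπa₀ : π a₀ ∈ Q' := (hQ'mem _).mpr ⟨a₀, ha₀Q, rfl⟩
  have hπa₀0 : π a₀ ≠ 0 := fun h => ha₀P ((hker a₀).mp h)
  -- apply the main engine
  obtain ⟨d, hd0, hdQ'⟩ := exists_central_mem hinj hpr Q' (π a₀) hπa₀ hπa₀0
  obtain ⟨c, rfl⟩ := Ideal.Quotient.mk_surjective d
  rw [halg, hφmk] at hdQ'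
  obtain ⟨q, hqQ, hq⟩ := (hQ'mem _).mp hdQ'
  -- algebraMap C R c - q ∈ P ≤ Q, so algebraMap C R c ∈ Q
  have hsub : algebraMap C R c - q ∈ P := by
    rw [← hker, map_sub, hq, sub_self]
  have hcQ : algebraMap C R c ∈ Q := by
    have : (algebraMap C R c - q) + q ∈ Q := Q.add_mem (le_of_lt hPQ hsub) hqQ
    simpa using this
  have hcP : c ∉ p := by
    intro hc
    exact hd0 (Ideal.Quotient.eq_zero_iff_mem.mpr hc)
  rw [SetLike.lt_iff_le_and_exists]
  constructor
  · intro c' hc'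
    rw [mem_contractTS] at hc' ⊢
    exact le_of_lt hPQ hc'
  · exact ⟨c, mem_contractTS.mpr hcQ, hcP⟩

end Incomp


/-- Let `R` be a ring which is a finitely generated module over a central subring `C`
(realised as a commutative ring mapping injectively onto a central subring of `R`),
and let `P` be a prime ideal of `R`.  Then the height of the prime ideal `P ∩ C`
of `C` is at least the height of `P`. -/
theorem height_contract_ge {C R : Type*} [CommRing C] [Ring R] [Algebra C R]
    (hinj : Function.Injective (algebraMap C R)) [Module.Finite C R]
    (P : TwoSidedIdeal R) (hP : IsPrimeTS P) :
    tsHeight P ≤ cHeight (contractTS (C := C) P) := by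
  apply sSup_le_sSup
  rintro n ⟨m, rfl, f, hmono, hprime, hlast⟩
  refine ⟨m, rfl, fun i => contractTS (C := C) (f i), ?_, ?_, ?_⟩
  · intro i j hij
    exact contractTS_lt_contractTS (f i) (f j) (hprime i) (hmono hij)
  · intro i
    exact contractTS_isPrime (f i) (hprime i)
  · show contractTS (f (Fin.last m)) = contractTS (C := C) P
    rw [hlast]
end

section
/- Let R be a ring which is a finitely generated module over a central subring C, let P and I be ideals of R with P properly contained in I, and suppose P is prime. Then P ∩ C is properly contained in I ∩ C (Incomparability). -/
section LemA
variable {A : Type*} [Ring A]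

/-- In a ring, the set of `x ∈ L` with `x * e = 0`, as a left submodule. -/
private def annIn (L : Submodule A A) (e : A) : Submodule A A :=
  L ⊓ LinearMap.ker (LinearMap.toSpanSingleton A A e)

private lemma mem_annIn {L : Submodule A A} {e x : A} :
    x ∈ annIn L e ↔ x ∈ L ∧ x * e = 0 := by
  simp [annIn, LinearMap.mem_ker, LinearMap.toSpanSingleton_apply, smul_eq_mul]

/-- Brauer's lemma, prime case: an atom in the lattice of left ideals of a prime ring
contains a nonzero idempotent. -/
private lemma brauer (hpr : ∀ x y : A, (∀ r : A, x * r * y = 0) → x = 0 ∨ y = 0)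
    {L : Submodule A A} (hL : IsAtom L) :
    ∃ e, e ∈ L ∧ e ≠ 0 ∧ e * e = e := by
  obtain ⟨u, huL, hu0⟩ := Submodule.exists_mem_ne_zero_of_ne_bot hL.1
  obtain ⟨r, hr⟩ : ∃ r : A, u * r * u ≠ 0 := by
    by_contra h
    push_neg at h
    rcases hpr u u h with h' | h' <;> exact hu0 h'
  set v : A := r * u with hv
  have hvL : v ∈ L := by simpa [smul_eq_mul] using L.smul_mem r huL
  have huv : u * v ≠ 0 := by rwa [hv, ← mul_assoc]
  have hv0 : v ≠ 0 := fun h0 => huv (by rw [h0, mul_zero])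
  have hmap : Submodule.map (LinearMap.toSpanSingleton A A v) L = L := by
    have hle : Submodule.map (LinearMap.toSpanSingleton A A v) L ≤ L := by
      rintro _ ⟨x, hx, rfl⟩
      simpa [LinearMap.toSpanSingleton_apply, smul_eq_mul] using L.smul_mem x hvL
    rcases hle.lt_or_eq with h | h
    · exfalso
      have : u * v ∈ (⊥ : Submodule A A) := by
        rw [← hL.2 _ h]
        exact ⟨u, huL, by simp [LinearMap.toSpanSingleton_apply, smul_eq_mul]⟩
      exact huv (by simpa using this)
    · exact h
  obtain ⟨e, heL, hev⟩ : ∃ e ∈ L, e * v = v := by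
    have : v ∈ Submodule.map (LinearMap.toSpanSingleton A A v) L := hmap.symm ▸ hvL
    obtain ⟨e, heL, he⟩ := this
    exact ⟨e, heL, by simpa [LinearMap.toSpanSingleton_apply, smul_eq_mul] using he⟩
  have he0 : e ≠ 0 := by rintro rfl; rw [zero_mul] at hev; exact hv0 hev.symm
  have hN : annIn L v = ⊥ := by
    rcases ((inf_le_left : annIn L v ≤ L).lt_or_eq) with h | h
    · exact hL.2 _ h
    · exfalso
      have h' : annIn L v = L := h
      have he' : e ∈ annIn L v := by rw [h']; exact heL
      rw [mem_annIn] at he'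
      exact hv0 (by rw [← hev, he'.2])
  have hsub : e * e - e ∈ annIn L v := by
    rw [mem_annIn]
    refine ⟨L.sub_mem (by simpa [smul_eq_mul] using L.smul_mem e heL) heL, ?_⟩
    rw [sub_mul, mul_assoc, hev, hev, sub_self]
  rw [hN, Submodule.mem_bot, sub_eq_zero] at hsub
  exact ⟨e, heL, he0, hsub⟩

/-- In a left-artinian prime ring, every nonzero two-sided ideal contains `1`. -/
lemma one_mem_of_artinian_prime [IsArtinian A A]
    (hpr : ∀ x y : A, (∀ r : A, x * r * y = 0) → x = 0 ∨ y = 0)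
    (J : TwoSidedIdeal A) (z : A) (hzJ : z ∈ J) (hz0 : z ≠ 0) : (1 : A) ∈ J := by
  classical
  have atom_le : ∀ N : Submodule A A, N ≠ ⊥ → ∃ L ≤ N, IsAtom L := by
    intro N hN
    obtain ⟨L, ⟨hLN, hL0⟩, hmin⟩ := IsArtinian.set_has_minimal
      {M' : Submodule A A | M' ≤ N ∧ M' ≠ ⊥} ⟨N, le_rfl, hN⟩
    refine ⟨L, hLN, hL0, fun b hb => ?_⟩
    by_contra hb0
    exact hmin b ⟨hb.le.trans hLN, hb0⟩ hb
  set JI : Submodule A A := TwoSidedIdeal.asIdeal J with hJI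
  have memJI : ∀ x : A, x ∈ JI ↔ x ∈ J := fun x => TwoSidedIdeal.mem_asIdeal
  obtain ⟨N, ⟨e, heJ, hee, hNe⟩, hmin⟩ := IsArtinian.set_has_minimal
    {N : Submodule A A | ∃ e, e ∈ J ∧ e * e = e ∧ N = annIn JI e}
    ⟨annIn JI 0, 0, J.zero_mem, by simp, rfl⟩
  have hNbot : N = ⊥ := by
    by_contra hN0
    obtain ⟨L, hLN, hLatom⟩ := atom_le N hN0
    obtain ⟨f, hfL, hf0, hff⟩ := brauer hpr hLatom
    have hfN : f ∈ N := hLN hfL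
    rw [hNe, mem_annIn] at hfN
    obtain ⟨hfJI, hfe⟩ := hfN
    have hfJ : f ∈ J := (memJI f).1 hfJI
    set g : A := e + f - e * f with hg
    have hgJ : g ∈ J := J.sub_mem (J.add_mem heJ hfJ) (J.mul_mem_right e f heJ)
    have hge : g * e = e := by
      rw [hg, sub_mul, add_mul, hee, mul_assoc, hfe, mul_zero, add_zero, sub_eq_self]
    have hgf : g * f = f := by
      rw [hg, sub_mul, add_mul, hff, mul_assoc, hff]
      abel
    have hgg : g * g = g := by
      calc g * g = g * e + g * f - g * (e * f) := by rw [hg]; rw [mul_sub, mul_add]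
      _ = e + f - e * f := by rw [hge, hgf, ← mul_assoc, hge]
      _ = g := hg.symm
    have hlt : annIn JI g < annIn JI e := by
      refine lt_of_le_of_ne ?_ ?_
      · intro x hx
        rw [mem_annIn] at hx ⊢
        refine ⟨hx.1, ?_⟩
        have : x * (g * e) = 0 := by rw [← mul_assoc, hx.2, zero_mul]
        rwa [hge] at this
      · intro hEq
        have hfin : f ∈ annIn JI g := by
          rw [hEq, mem_annIn]; exact ⟨hfJI, hfe⟩
        rw [mem_annIn] at hfin
        have : f * g = f := by
          rw [hg, mul_sub, mul_add, hff, ← mul_assoc, hfe, zero_mul, sub_zero, zero_add]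
        exact hf0 (by rw [← this, hfin.2])
    exact hmin (annIn JI g) ⟨g, hgJ, hgg, rfl⟩ (hNe ▸ hlt)
  have hann : ∀ x : A, x ∈ J → x * e = x := by
    intro x hx
    have hx' : x - x * e ∈ annIn JI e := by
      rw [mem_annIn]
      refine ⟨JI.sub_mem ((memJI x).2 hx) ((memJI _).2 (J.mul_mem_right x e hx)), ?_⟩
      rw [sub_mul, mul_assoc, hee, sub_self]
    rw [← hNe, hNbot, Submodule.mem_bot, sub_eq_zero] at hx'
    exact hx'.symm
  have he0 : e ≠ 0 := by
    rintro rfl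
    exact hz0 (by rw [← hann z hzJ, mul_zero])
  have hkey : ∀ r : A, e * r * (1 - e) = 0 := by
    intro r
    have h1 : e * r ∈ J := J.mul_mem_right e r heJ
    have h2 : e * r - e * r * e ∈ annIn JI e := by
      rw [mem_annIn]
      refine ⟨JI.sub_mem ((memJI _).2 h1) ((memJI _).2 (J.mul_mem_right _ e h1)), ?_⟩
      rw [sub_mul, mul_assoc _ e e, hee, sub_self]
    rw [← hNe, hNbot, Submodule.mem_bot] at h2
    rw [mul_sub, mul_one, h2]
  rcases hpr e (1 - e) hkey with h | h
  · exact absurd h he0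
  · rw [sub_eq_zero] at h
    rw [h]
    exact heJ

end LemA


open scoped TensorProduct


/-- In a prime ring `Q`, finite over a central domain `C₀` acting faithfully,
every nonzero two-sided ideal contains a nonzero central element. -/
theorem central_of_prime_finite_aux {C₀ Q K : Type*} [CommRing C₀] [IsDomain C₀] [Field K]
    [Algebra C₀ K] [IsFractionRing C₀ K] [Ring Q] [Nontrivial Q] [Algebra C₀ Q]
    [Module.Finite C₀ Q]
    (hQprime : ∀ x y : Q, (∀ r : Q, x * r * y = 0) → x = 0 ∨ y = 0)
    (hinj : ∀ x : C₀, algebraMap C₀ Q x = 0 → x = 0)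
    (J : TwoSidedIdeal Q) (z : Q) (hzJ : z ∈ J) (hz0 : z ≠ 0) :
    ∃ s : C₀, s ≠ 0 ∧ algebraMap C₀ Q s ∈ J := by
  classical
  have htf : ∀ s : C₀, s ≠ 0 → ∀ x : Q, s • x = 0 → x = 0 := by
    intro s hs x hx
    rw [Algebra.smul_def] at hx
    have h0 : algebraMap C₀ Q s ≠ 0 := fun h => hs (hinj s h)
    have hall : ∀ r : Q, algebraMap C₀ Q s * r * x = 0 := by
      intro r
      rw [Algebra.commutes s r, mul_assoc, hx, mul_zero]
    rcases hQprime _ _ hall with h | h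
    · exact absurd h h0
    · exact h
  set S := nonZeroDivisors C₀ with hS
  set f : Q →ₗ[C₀] K ⊗[C₀] Q := TensorProduct.mk C₀ K Q 1 with hf
  haveI iLM : IsLocalizedModule S f :=
    (isLocalizedModule_iff_isBaseChange S K f).mpr (TensorProduct.isBaseChange C₀ Q K)
  have hfapp : ∀ p : Q, f p = (1 : K) ⊗ₜ[C₀] p := fun p => rfl
  have fmul : ∀ p p' : Q, f p * f p' = f (p * p') := by
    intro p p'
    rw [hfapp, hfapp, hfapp, Algebra.TensorProduct.tmul_mul_tmul, one_mul]
  have scancel : ∀ (s : S) (x y : K ⊗[C₀] Q), s • x = s • y → x = y :=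
    fun s x y h => IsLocalizedModule.smul_injective f s h
  have finj : ∀ p : Q, f p = 0 → p = 0 := by
    intro p hp
    obtain ⟨t, ht⟩ := IsLocalizedModule.exists_of_eq (S := S) (f := f) (x₁ := p) (x₂ := 0)
      (by rw [map_zero, hp])
    rw [smul_zero] at ht
    exact htf t (nonZeroDivisors.ne_zero t.2) p ht
  have hsurj : ∀ x : K ⊗[C₀] Q, ∃ (p : Q) (s : S), s • x = f p := by
    intro x
    obtain ⟨⟨p, s⟩, h⟩ := IsLocalizedModule.surj S f x
    exact ⟨p, s, h⟩
  -- the base change is a prime ring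
  have hAprime : ∀ x y : K ⊗[C₀] Q, (∀ r : K ⊗[C₀] Q, x * r * y = 0) → x = 0 ∨ y = 0 := by
    intro x y h
    by_contra hc
    push_neg at hc
    obtain ⟨hx0, hy0⟩ := hc
    obtain ⟨p, s, hp⟩ := hsurj x
    obtain ⟨p', t, hp'⟩ := hsurj y
    have hp0 : p ≠ 0 := by
      rintro rfl
      rw [map_zero] at hp
      exact hx0 (scancel s x 0 (by rw [hp, smul_zero]))
    have hp'0 : p' ≠ 0 := by
      rintro rfl
      rw [map_zero] at hp'
      exact hy0 (scancel t y 0 (by rw [hp', smul_zero]))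
    have hall : ∀ r : Q, p * r * p' = 0 := by
      intro r
      apply finj
      have : f p * f r * f p' = 0 := by
        rw [← hp, ← hp']
        simp only [smul_mul_assoc, mul_smul_comm]
        rw [h (f r), smul_zero, smul_zero]
      rwa [fmul, fmul] at this
    rcases hQprime p p' hall with h' | h'
    · exact hp0 h'
    · exact hp'0 h'
  -- the ideal of elements landing in `J` after clearing denominators
  set T : TwoSidedIdeal (K ⊗[C₀] Q) := TwoSidedIdeal.mk'
    {w | ∃ i, i ∈ J ∧ ∃ s : S, s • w = f i}
    ⟨0, J.zero_mem, 1, by rw [smul_zero, map_zero]⟩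
    (by
      rintro x y ⟨i, hi, s, hs⟩ ⟨j, hj, t, ht⟩
      have hs' : (s : C₀) • x = f i := hs
      have ht' : (t : C₀) • y = f j := ht
      refine ⟨(t : C₀) • i + (s : C₀) • j, ?_, s * t, ?_⟩
      · exact J.add_mem
          (by rw [Algebra.smul_def]; exact J.mul_mem_left _ _ hi)
          (by rw [Algebra.smul_def]; exact J.mul_mem_left _ _ hj)
      · show ((s : C₀) * (t : C₀)) • (x + y) = _
        rw [map_add, map_smul, map_smul, ← hs', ← ht', smul_add, smul_smul, smul_smul,
          mul_comm (t : C₀) (s : C₀)])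
    (by
      rintro x ⟨i, hi, s, hs⟩
      exact ⟨-i, J.neg_mem hi, s, by rw [smul_neg, map_neg, hs]⟩)
    (by
      rintro x y ⟨i, hi, s, hs⟩
      obtain ⟨p, t, hp⟩ := hsurj x
      have hs' : (s : C₀) • y = f i := hs
      have hp' : (t : C₀) • x = f p := hp
      refine ⟨p * i, J.mul_mem_left p i hi, t * s, ?_⟩
      show ((t : C₀) * (s : C₀)) • (x * y) = f (p * i)
      rw [← fmul, ← hp', ← hs', smul_mul_assoc, mul_smul_comm, ← mul_smul])
    (by
      rintro x y ⟨i, hi, s, hs⟩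
      obtain ⟨p, t, hp⟩ := hsurj y
      have hs' : (s : C₀) • x = f i := hs
      have hp' : (t : C₀) • y = f p := hp
      refine ⟨i * p, J.mul_mem_right i p hi, s * t, ?_⟩
      show ((s : C₀) * (t : C₀)) • (x * y) = f (i * p)
      rw [← fmul, ← hp', ← hs', smul_mul_assoc, mul_smul_comm, ← mul_smul])
  haveI : IsArtinian (K ⊗[C₀] Q) (K ⊗[C₀] Q) := isArtinian_of_tower K inferInstance
  have hone : (1 : K ⊗[C₀] Q) ∈ T := by
    refine one_mem_of_artinian_prime hAprime T (f z) ?_ (fun h => hz0 (finj z h))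
    rw [TwoSidedIdeal.mem_mk']
    exact ⟨z, hzJ, 1, by rw [one_smul]⟩
  rw [TwoSidedIdeal.mem_mk'] at hone
  obtain ⟨i, hiJ, s, hs⟩ := hone
  have key : f (algebraMap C₀ Q (s : C₀)) = (s : C₀) • (1 : K ⊗[C₀] Q) := by
    rw [hfapp, Algebra.TensorProduct.one_def, TensorProduct.smul_tmul', TensorProduct.smul_tmul,
      Algebra.smul_def, mul_one]
  have : f (algebraMap C₀ Q (s : C₀)) = f i := by
    rw [key, ← Submonoid.smul_def, hs]
  obtain ⟨t, ht⟩ := IsLocalizedModule.exists_of_eq (S := S) (f := f) this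
  have : algebraMap C₀ Q (s : C₀) = i := by
    have h' : (t : C₀) • (algebraMap C₀ Q (s : C₀) - i) = 0 := by
      rw [smul_sub, sub_eq_zero]
      exact ht
    have := htf (t : C₀) (nonZeroDivisors.ne_zero t.2) _ h'
    rwa [sub_eq_zero] at this
  exact ⟨(s : C₀), nonZeroDivisors.ne_zero s.2, this ▸ hiJ⟩



/-- Key extraction lemma: if `P` is a prime two-sided ideal, `I ⊇ P` a two-sided ideal and
`a ∈ I \ P`, then there is a central element `c` with `algebraMap c ∈ I` and `∉ P`. -/
theorem exists_central_sep {C R : Type*} [CommRing C] [Ring R] [Algebra C R]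
    [Module.Finite C R] (P I : TwoSidedIdeal R)
    (hP : P ≠ ⊤) (hPprime : ∀ a b : R, (∀ r : R, a * r * b ∈ P) → a ∈ P ∨ b ∈ P)
    (hPI : P ≤ I) (a : R) (haI : a ∈ I) (haP : a ∉ P) :
    ∃ c : C, algebraMap C R c ∈ I ∧ algebraMap C R c ∉ P := by
  classical
  set Q := P.ringCon.Quotient with hQ
  set π : R →+* Q := P.ringCon.mk' with hπ
  have hπs : Function.Surjective π := Quotient.mk''_surjective
  have hker : ∀ x : R, π x = 0 ↔ x ∈ P := by
    intro x
    have h0 : π x = 0 ↔ P.ringCon x 0 := P.ringCon.eq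
    rw [h0, P.rel_iff, sub_zero]
  -- Q is a prime nontrivial ring
  have hQprime : ∀ x y : Q, (∀ r : Q, x * r * y = 0) → x = 0 ∨ y = 0 := by
    intro x y h
    obtain ⟨x, rfl⟩ := hπs x
    obtain ⟨y, rfl⟩ := hπs y
    have : ∀ r : R, x * r * y ∈ P := by
      intro r
      rw [← hker, map_mul, map_mul]
      exact h (π r)
    rcases hPprime x y this with h' | h'
    · exact Or.inl ((hker x).mpr h')
    · exact Or.inr ((hker y).mpr h')
  have hQ1 : (1 : Q) ≠ 0 := by
    intro h
    have h1 : (1 : R) ∈ P := (hker 1).mp (by simpa using h)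
    apply hP
    rw [eq_top_iff]
    intro x _
    simpa using P.mul_mem_left x 1 h1
  haveI : Nontrivial Q := ⟨1, 0, hQ1⟩
  -- the central image
  set ψ : C →+* Q := π.comp (algebraMap C R) with hψ
  have hψc : ∀ (c : C) (x : Q), ψ c * x = x * ψ c := by
    intro c x
    obtain ⟨r, rfl⟩ := hπs x
    rw [hψ, RingHom.comp_apply, ← map_mul, ← map_mul, Algebra.commutes]
  set q : Ideal C := RingHom.ker ψ with hq
  have hqprime : q.IsPrime := by
    constructor
    · intro h
      have h1 : (1 : C) ∈ q := by rw [h]; trivial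
      have h2 : ψ 1 = 0 := h1
      rw [map_one] at h2
      exact hQ1 h2
    · intro x y hxy
      rw [hq, RingHom.mem_ker, map_mul] at hxy
      have : ∀ r : Q, ψ x * r * ψ y = 0 := by
        intro r
        rw [hψc x r, mul_assoc, hxy, mul_zero]
      rcases hQprime _ _ this with h | h
      · exact Or.inl h
      · exact Or.inr h
  set C₀ := C ⧸ q with hC₀
  haveI : IsDomain C₀ := (Ideal.Quotient.isDomain_iff_prime q).mpr hqprime
  set φ₀ : C₀ →+* Q := Ideal.Quotient.lift q ψ (fun _ h => h) with hφ₀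
  have hφ₀mk : ∀ c : C, φ₀ (Ideal.Quotient.mk q c) = ψ c := fun c => Ideal.Quotient.lift_mk q _ _
  have hφ₀inj : ∀ x : C₀, φ₀ x = 0 → x = 0 := by
    intro x hx
    obtain ⟨c, rfl⟩ := Ideal.Quotient.mk_surjective x
    rw [hφ₀mk] at hx
    exact (Ideal.Quotient.eq_zero_iff_mem).mpr hx
  letI : Algebra C₀ Q := RingHom.toAlgebra' φ₀ (by
    intro c x
    obtain ⟨c', rfl⟩ := Ideal.Quotient.mk_surjective c
    rw [hφ₀mk]
    exact hψc c' x)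
  have halg : algebraMap C₀ Q = φ₀ := rfl
  -- Q is finite over C₀
  haveI : Module.Finite C₀ Q := by
    obtain ⟨s, hs⟩ := Module.Finite.fg_top (R := C) (M := R)
    refine ⟨⟨s.image π, ?_⟩⟩
    rw [eq_top_iff]
    rintro x -
    obtain ⟨r, rfl⟩ := hπs x
    have hr : r ∈ Submodule.span C (s : Set R) := hs ▸ Submodule.mem_top
    induction hr using Submodule.span_induction with
    | mem z hz => exact Submodule.subset_span (by simpa using Finset.mem_image_of_mem π hz)
    | zero => simpa using Submodule.zero_mem _
    | add y z _ _ hy hz => rw [map_add]; exact Submodule.add_mem _ hy hz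
    | smul c y _ hy =>
      have : π (c • y) = (Ideal.Quotient.mk q c) • π y := by
        rw [Algebra.smul_def, map_mul, Algebra.smul_def, halg, hφ₀mk]
        rfl
      rw [this]
      exact Submodule.smul_mem _ _ hy
  -- torsion-freeness of Q over C₀
  have htf : ∀ (s : C₀), s ≠ 0 → ∀ x : Q, s • x = 0 → x = 0 := by
    intro s hs x hx
    rw [Algebra.smul_def, halg] at hx
    have h0 : φ₀ s ≠ 0 := fun h => hs (hφ₀inj s h)
    have : ∀ r : Q, φ₀ s * r * x = 0 := by
      intro r
      have hc : φ₀ s * r = r * φ₀ s := by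
        rw [← halg]; exact Algebra.commutes s r
      rw [hc, mul_assoc, hx, mul_zero]
    rcases hQprime _ _ this with h | h
    · exact absurd h h0
    · exact h
  -- the image of I in Q, as a two-sided ideal
  set Ibar : TwoSidedIdeal Q := TwoSidedIdeal.mk' (π '' I)
    ⟨0, I.zero_mem, map_zero π⟩
    (by rintro _ _ ⟨i, hi, rfl⟩ ⟨j, hj, rfl⟩; exact ⟨i + j, I.add_mem hi hj, map_add π i j⟩)
    (by rintro _ ⟨i, hi, rfl⟩; exact ⟨-i, I.neg_mem hi, map_neg π i⟩)
    (by
      rintro x _ ⟨i, hi, rfl⟩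
      obtain ⟨r, rfl⟩ := hπs x
      exact ⟨r * i, I.mul_mem_left r i hi, map_mul π r i⟩)
    (by
      rintro _ y ⟨i, hi, rfl⟩
      obtain ⟨r, rfl⟩ := hπs y
      exact ⟨i * r, I.mul_mem_right i r hi, map_mul π i r⟩) with hIbar
  have hzmem : π a ∈ Ibar := by
    rw [hIbar]
    exact (TwoSidedIdeal.mem_mk' _ _ _ _ _ _ _).mpr ⟨a, haI, rfl⟩
  have hz0 : π a ≠ 0 := fun h => haP ((hker a).mp h)
  obtain ⟨s, hs0, hsmem⟩ := central_of_prime_finite_aux (K := FractionRing C₀)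
    hQprime (by intro x hx; exact hφ₀inj x hx) Ibar (π a) hzmem hz0
  replace hsmem := (TwoSidedIdeal.mem_mk' _ _ _ _ _ _ _).mp hsmem
  obtain ⟨i, hiI, hi⟩ := hsmem
  obtain ⟨c, rfl⟩ := Ideal.Quotient.mk_surjective s
  have hπc : π (algebraMap C R c) = π i := by
    rw [hi, halg, hφ₀mk]
    rfl
  have hdiff : algebraMap C R c - i ∈ P := by
    rw [← hker, map_sub, hπc, sub_self]
  refine ⟨c, ?_, ?_⟩
  · have := I.add_mem (hPI hdiff) hiI
    simpa using this
  · intro hc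
    apply hs0
    apply hφ₀inj
    rw [hφ₀mk]
    exact (hker _).mpr hc

/-- Incomparability: let `R` be a ring which is a finitely generated module over a
central subring `C`, let `P` and `I` be (two-sided) ideals of `R` with `P` prime and
`P` properly contained in `I`.  Then `P ∩ C` is properly contained in `I ∩ C`. -/
theorem contract_lt_contract_of_prime_lt {C R : Type*} [CommRing C] [Ring R]
    [Algebra C R] (hinj : Function.Injective (algebraMap C R)) [Module.Finite C R]
    (P I : TwoSidedIdeal R) (hP : IsPrimeTS P) (hlt : P < I) :
    contractTS (C := C) P < contractTS (C := C) I := by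
  obtain ⟨a, haI, haP⟩ := SetLike.exists_of_lt hlt
  obtain ⟨c, hcI, hcP⟩ := exists_central_sep (C := C) P I hP.1 hP.2 hlt.le a haI haP
  have hle : contractTS (C := C) P ≤ contractTS (C := C) I := by
    intro x hx
    rw [contractTS, Ideal.mem_comap, TwoSidedIdeal.mem_asIdeal] at hx ⊢
    exact hlt.le hx
  refine lt_of_le_of_ne hle (fun h => hcP ?_)
  have hc : c ∈ contractTS (C := C) I := by
    rw [contractTS, Ideal.mem_comap, TwoSidedIdeal.mem_asIdeal]
    exact hcI
  rw [← h] at hc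
  rwa [contractTS, Ideal.mem_comap, TwoSidedIdeal.mem_asIdeal] at hc
end

section
/- Let R = k[X] × k for a field k, and C = {(f, f(1)) : f ∈ k[X]} ⊆ R. Then C is a subring of R isomorphic to k[X], the ideal P = k[X] × {0} is a minimal prime of R, and P ∩ C = {(f, f(1)) : f(1) = 0} is a maximal ideal of C of height 1; in particular the inequality ht(P ∩ C) ≥ ht(P) can be strict, and R is not a projective C-module. -/
variable (k : Type*) [Field k]

/-- The embedding `k[X] → k[X] × k`, `f ↦ (f, f(1))`, whose image is the subring `C`. -/
noncomputable def cEmb : Polynomial k →+* Polynomial k × k :=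
  (RingHom.id (Polynomial k)).prod (Polynomial.evalRingHom (1 : k))

namespace Order

theorem primeChainHeight_eq_height {α : Type*} [Preorder α] {isP : α → Prop} (x : {a // isP a}) :
    primeChainHeight isP x = height x := by
  rw [primeChainHeight, height_eq_iSup_last_eq]
  refine le_antisymm (sSup_le ?_) (iSup₂_le fun p hp ↦ le_sSup ?_)
  · rintro _ ⟨m, rfl, f, hf, hP, hlast⟩
    exact le_iSup₂_of_le (LTSeries.mk m (fun i ↦ ⟨f i, hP i⟩) fun _ _ h ↦ hf h)
      (Subtype.ext hlast) le_rfl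
  · exact ⟨p.length, rfl, Subtype.val ∘ p, Subtype.strictMono_coe _ |>.comp p.strictMono,
      fun i ↦ (p i).2, congrArg Subtype.val hp⟩

end Order

theorem Ideal.cHeight_eq_height {R : Type*} [CommRing R] (p : Ideal R) [hp : p.IsPrime] :
    cHeight p = p.height := by
  rw [cHeight, Order.primeChainHeight_eq_height ⟨p, hp⟩, PrimeSpectrum.height_eq_orderHeight ⟨p, hp⟩,
    ← Order.height_orderIso (PrimeSpectrum.equivSubtype R)]
  rfl

theorem Ideal.prod_top_mem_minimalPrimes {R S : Type*} [CommRing R] [CommRing S] {p : Ideal S}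
    (hp : p ∈ minimalPrimes S) : Ideal.prod (⊤ : Ideal R) p ∈ minimalPrimes (R × S) := by
  have hprime := hp.1.1
  refine ⟨⟨isPrime_ideal_prod_top', bot_le⟩, ?_⟩
  rintro Q ⟨hQ, -⟩ hle
  rcases (ideal_prod_prime Q).1 hQ with ⟨q, -, rfl⟩ | ⟨q, hq, rfl⟩
  · have h01 : ((0 : R), (1 : S)) ∈ Ideal.prod q ⊤ := (mem_prod _ _).2 ⟨q.zero_mem, trivial⟩
    exact absurd ((mem_prod _ _).1 (hle h01)).2 hprime.one_notMem
  · exact prod_mono_right (hp.2 ⟨hq, bot_le⟩ fun s hs ↦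
      ((mem_prod _ _).1 (hle (show ((0 : R), s) ∈ prod ⊤ q from ⟨trivial, hs⟩))).2)

section IdProd

variable {R S : Type*} [CommRing R] [CommRing S] (φ : R →+* S)

theorem RingHom.injective_id_prod : Function.Injective ((RingHom.id R).prod φ) :=
  fun _ _ h ↦ congrArg Prod.fst h

theorem RingHom.comap_id_prod_prod_top_bot :
    Ideal.comap ((RingHom.id R).prod φ) (Ideal.prod ⊤ ⊥) = RingHom.ker φ := by
  ext r
  simp [Ideal.mem_prod]

theorem RingHom.finite_id_prod (hφ : Function.Surjective φ) : ((RingHom.id R).prod φ).Finite := by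
  classical
  let := ((RingHom.id R).prod φ).toAlgebra
  refine ⟨⟨{(1, 1), (0, 1)}, eq_top_iff.2 fun ⟨r, s⟩ _ ↦ ?_⟩⟩
  obtain ⟨t, ht⟩ := hφ (s - φ r)
  have hrs : ((r, s) : R × S) = r • (1, 1) + t • (0, 1) := by
    simp [Algebra.smul_def, RingHom.algebraMap_toAlgebra, ht]
  rw [hrs]
  exact add_mem (Submodule.smul_mem _ _ (Submodule.subset_span (by simp)))
    (Submodule.smul_mem _ _ (Submodule.subset_span (by simp)))

theorem RingHom.not_projective_id_prod [IsDomain R] [Nontrivial S] (hφ : RingHom.ker φ ≠ ⊥) :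
    ¬ (letI := ((RingHom.id R).prod φ).toAlgebra; Module.Projective R (R × S)) := by
  let := ((RingHom.id R).prod φ).toAlgebra
  intro
  obtain ⟨r, hr, hr0⟩ := Submodule.exists_mem_ne_zero_of_ne_bot hφ
  have htorsion : r • ((0, 1) : R × S) = 0 := by
    simpa [Algebra.smul_def, RingHom.algebraMap_toAlgebra] using hr
  rcases smul_eq_zero.mp htorsion with h | h
  · exact hr0 h
  · exact one_ne_zero (congrArg Prod.snd h)

end IdProd

/-- Let `R = k[X] × k` and `C = {(f, f(1)) : f ∈ k[X]} ≅ k[X]`, a central subring over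
which `R` is a finitely generated module.  The ideal `P = k[X] × {0}` is a minimal
prime of `R`, while `P ∩ C = {(f, f(1)) : f(1) = 0}` is a maximal ideal of `C` of
height `1` (and `P` has height `0`), so the inequality `ht(P ∩ C) ≥ ht P` can be
strict; moreover `R` is not a projective `C`-module. -/
theorem product_ring_example :
    Function.Injective (cEmb k) ∧
    (letI := (cEmb k).toAlgebra; Module.Finite (Polynomial k) (Polynomial k × k)) ∧
    (Ideal.prod (⊤ : Ideal (Polynomial k)) (⊥ : Ideal k)).IsPrime ∧
    Ideal.prod (⊤ : Ideal (Polynomial k)) (⊥ : Ideal k) ∈ minimalPrimes (Polynomial k × k) ∧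
    Ideal.comap (cEmb k) (Ideal.prod (⊤ : Ideal (Polynomial k)) (⊥ : Ideal k)) =
      RingHom.ker (Polynomial.evalRingHom (1 : k)) ∧
    (Ideal.comap (cEmb k) (Ideal.prod (⊤ : Ideal (Polynomial k)) (⊥ : Ideal k))).IsMaximal ∧
    cHeight (Ideal.comap (cEmb k) (Ideal.prod (⊤ : Ideal (Polynomial k)) (⊥ : Ideal k))) = 1 ∧
    cHeight (Ideal.prod (⊤ : Ideal (Polynomial k)) (⊥ : Ideal k)) = 0 ∧
    ¬ (letI := (cEmb k).toAlgebra; Module.Projective (Polynomial k) (Polynomial k × k)) := by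
  have hsurj : Function.Surjective (Polynomial.evalRingHom (1 : k)) :=
    Polynomial.eval_surjective 1
  have hmax : (RingHom.ker (Polynomial.evalRingHom (1 : k))).IsMaximal :=
    RingHom.ker_isMaximal_of_surjective _ hsurj
  have hheight : (RingHom.ker (Polynomial.evalRingHom (1 : k))).height = 1 :=
    IsPrincipalIdealRing.height_eq_one_of_isMaximal _ (Polynomial.not_isField k)
  have hmin : Ideal.prod (⊤ : Ideal (Polynomial k)) (⊥ : Ideal k) ∈
      minimalPrimes (Polynomial k × k) :=
    Ideal.prod_top_mem_minimalPrimes (by simp [IsDomain.minimalPrimes_eq_singleton_bot])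
  have hprime := hmin.1.1
  have hcomap := RingHom.comap_id_prod_prod_top_bot (Polynomial.evalRingHom (1 : k))
  exact ⟨RingHom.injective_id_prod _, RingHom.finite_id_prod _ hsurj, hprime, hmin, hcomap,
    hcomap ▸ hmax, hcomap ▸ (Ideal.cHeight_eq_height _).trans hheight,
    (Ideal.cHeight_eq_height _).trans (Ideal.height_eq_zero_iff.2 hmin),
    RingHom.not_projective_id_prod _ (Ideal.ne_bot_of_height_eq_one hheight)⟩
end
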